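/- (Under-segmentation interpolation, Eq. (16)) Let P₀, R₀ ≥ 0 and Q ≥ 1 be integers and set S = P₀ + Q + R₀. Let h : Fin S → ℂ be a spatial channel vector supported on the visibility region, i.e. h(n) = 0 whenever n < P₀ or n ≥ P₀ + Q. Define the Q-point angular representation of the window by h_{a,VR}(m) = Σ_{u=0}^{Q−1} h(P₀ + u)·exp(−2πi·m·u/Q) for m = 0, …, Q−1, and the S-point angular representation of the full vector by h_a(k) = Σ_{n=0}^{S−1} h(n)·exp(−2πi·n·k/S). Then for every k such that exp(2πi·(m/Q − k/S)) ≠ 1 for all m ∈ {0, …, Q−1}, one has h_a(k) = exp(−2πi·k·P₀/S) · Σ_{m=0}^{Q−1} (h_{a,VR}(m)/Q) · (1 − exp(−2πi·k·Q/S)) / (1 − exp(2πi·(m/Q − k/S))). In other words, the angular-domain representation of the under-segmented array is an interpolation of the angular-domain representation of the visibility-region window. -/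

import Mathlib

open Complex

/-!
With `ζ = exp(2πi/Q)` and `w = exp(-2πik/S)`, every exponential in the statement is a power of
`ζ` or `w`, and the support hypothesis reduces the `S`-point sum to `w ^ P₀ * ∑_{u<Q} g u w ^ u`
with `g u = h (P₀ + u)`. Inverting the `Q`-point DFT `ĝ` of `g` writes `g u = Q⁻¹ ∑_m ĝ m ζ ^ (m u)`, so the
window sum becomes `Q⁻¹ ∑_m ĝ m ∑_{u<Q} (ζ ^ m w) ^ u`, and each inner geometric sum equals
`(1 - w ^ Q) / (1 - ζ ^ m w)` because `ζ ^ Q = 1`.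
-/

open Finset

theorem Finset.sum_range_eq_sum_range_add_of_support {M : Type*} [AddCommMonoid M] (f : ℕ → M)
    (a Q b : ℕ) (hf : ∀ n, n < a + Q + b → (n < a ∨ a + Q ≤ n) → f n = 0) :
    ∑ n ∈ range (a + Q + b), f n = ∑ u ∈ range Q, f (a + u) := by
  have hwindow : ∑ n ∈ Ico a (a + Q), f n = ∑ u ∈ range Q, f (a + u) := by
    rw [sum_Ico_eq_sum_range, Nat.add_sub_cancel_left]
  rw [← hwindow]
  refine (sum_subset (fun n hn => ?_) fun n hn hn' => hf n ?_ ?_).symm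
  · simp only [mem_Ico, mem_range] at hn ⊢
    omega
  · simpa using hn
  · simp only [mem_Ico] at hn'
    omega

theorem geom_sum_eq_one_sub_div {K : Type*} [Field K] {x : K} (hx : x ≠ 1) (n : ℕ) :
    ∑ i ∈ range n, x ^ i = (1 - x ^ n) / (1 - x) :=
  eq_div_of_mul_eq (sub_ne_zero.2 hx.symm) (by rw [mul_comm, mul_neg_geom_sum])

/-- For `ζ = exp(2πi/Q)` and `g u = h (P₀ + u)` this is the paper's `h_{a,VR}`. -/
def dftRange {K : Type*} [Field K] (ζ : K) (Q : ℕ) (g : ℕ → K) (m : ℕ) : K :=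
  ∑ v ∈ range Q, g v * (ζ ^ (m * v))⁻¹

namespace IsPrimitiveRoot

variable {K : Type*} [Field K] {ζ : K} {Q : ℕ}

theorem sum_pow_mul_inv_pow (hζ : IsPrimitiveRoot ζ Q) {u v : ℕ} (hu : u < Q) (hv : v < Q) :
    ∑ m ∈ range Q, ζ ^ (m * u) * (ζ ^ (m * v))⁻¹ = if u = v then (Q : K) else 0 := by
  have hζ0 : ζ ≠ 0 := hζ.ne_zero (by omega)
  have hpow : ∀ m, ζ ^ (m * u) * (ζ ^ (m * v))⁻¹ = (ζ ^ u / ζ ^ v) ^ m := fun m => by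
    rw [div_pow, ← pow_mul, ← pow_mul, mul_comm u, mul_comm v, div_eq_mul_inv]
  simp only [hpow]
  split_ifs with huv
  · subst huv
    simp [div_self (pow_ne_zero u hζ0)]
  · have hr : ζ ^ u / ζ ^ v ≠ 1 := fun h =>
      huv (hζ.pow_inj hu hv ((div_eq_one_iff_eq (pow_ne_zero v hζ0)).mp h))
    have hrQ : (ζ ^ u / ζ ^ v) ^ Q = 1 := by
      rw [div_pow, ← pow_mul, ← pow_mul, mul_comm u, mul_comm v, pow_mul, pow_mul,
        hζ.pow_eq_one, one_pow, one_pow, div_one]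
    rw [geom_sum_eq hr, hrQ, sub_self, zero_div]

theorem sum_dftRange_mul_pow (hζ : IsPrimitiveRoot ζ Q) (g : ℕ → K) {u : ℕ} (hu : u < Q) :
    ∑ m ∈ range Q, dftRange ζ Q g m * ζ ^ (m * u) = Q * g u := by
  calc ∑ m ∈ range Q, dftRange ζ Q g m * ζ ^ (m * u)
      = ∑ v ∈ range Q, g v * ∑ m ∈ range Q, ζ ^ (m * u) * (ζ ^ (m * v))⁻¹ := by
        simp only [dftRange, sum_mul, mul_sum]
        rw [sum_comm]
        refine sum_congr rfl fun v _ => sum_congr rfl fun m _ => by ring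
    _ = Q * g u := by
        rw [sum_congr rfl fun v hv => by rw [hζ.sum_pow_mul_inv_pow hu (mem_range.1 hv)]]
        simp [mem_range.2 hu, mul_comm]

theorem sum_mul_pow_eq_sum_dftRange_mul (hζ : IsPrimitiveRoot ζ Q) (g : ℕ → K) (w : K)
    (hw : ∀ m < Q, ζ ^ m * w ≠ 1) :
    ∑ u ∈ range Q, g u * w ^ u
      = ∑ m ∈ range Q, dftRange ζ Q g m / Q * (1 - w ^ Q) / (1 - ζ ^ m * w) := by
  rcases Nat.eq_zero_or_pos Q with rfl | hQ
  · simp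
  have : NeZero Q := ⟨hQ.ne'⟩
  have hQK : (Q : K) ≠ 0 := hζ.neZero'.out
  have hinv : ∀ u < Q, g u = ∑ m ∈ range Q, dftRange ζ Q g m / Q * ζ ^ (m * u) := fun u hu => by
    simp only [div_mul_eq_mul_div, ← sum_div, hζ.sum_dftRange_mul_pow g hu]
    field_simp
  calc ∑ u ∈ range Q, g u * w ^ u
      = ∑ m ∈ range Q, dftRange ζ Q g m / Q * ∑ u ∈ range Q, (ζ ^ m * w) ^ u := by
        rw [sum_congr rfl fun u hu => by rw [hinv u (mem_range.1 hu)]]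
        simp only [sum_mul, mul_sum]
        rw [sum_comm]
        refine sum_congr rfl fun m _ => sum_congr rfl fun u _ => by ring
    _ = ∑ m ∈ range Q, dftRange ζ Q g m / Q * (1 - w ^ Q) / (1 - ζ ^ m * w) := by
        refine sum_congr rfl fun m hm => ?_
        rw [geom_sum_eq_one_sub_div (hw m (mem_range.1 hm)), mul_pow, ← pow_mul, mul_comm m,
          pow_mul, hζ.pow_eq_one, one_pow, one_mul, mul_div_assoc]

end IsPrimitiveRoot

/-- (Under-segmentation interpolation, Eq. (16)) For a spatial channel of length
`S = P₀ + Q + R₀` supported on the visibility region `[P₀, P₀ + Q)`, the `S`-point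
angular representation `h_a` is an interpolation of the `Q`-point angular
representation `h_{a,VR}` of the visibility-region window. -/
theorem under_segmentation_interpolation
    (P0 R0 Q : ℕ) (hQ : 0 < Q) (h : ℕ → ℂ)
    (hsupp : ∀ n, n < P0 + Q + R0 → (n < P0 ∨ P0 + Q ≤ n) → h n = 0)
    (k : ℕ)
    (hk : ∀ m < Q, Complex.exp (2 * Real.pi * Complex.I *
        ((m : ℂ) / (Q : ℂ) - (k : ℂ) / ((P0 + Q + R0 : ℕ) : ℂ))) ≠ 1) :
    (∑ n ∈ Finset.range (P0 + Q + R0),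
        h n * Complex.exp (-(2 * Real.pi * Complex.I * (n : ℂ) * (k : ℂ)
          / ((P0 + Q + R0 : ℕ) : ℂ))))
      = Complex.exp (-(2 * Real.pi * Complex.I * (k : ℂ) * (P0 : ℂ)
          / ((P0 + Q + R0 : ℕ) : ℂ))) *
        ∑ m ∈ Finset.range Q,
          ((∑ u ∈ Finset.range Q,
              h (P0 + u) * Complex.exp (-(2 * Real.pi * Complex.I * (m : ℂ) * (u : ℂ)
                / (Q : ℂ)))) / (Q : ℂ)) *
            (1 - Complex.exp (-(2 * Real.pi * Complex.I * (k : ℂ) * (Q : ℂ)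
              / ((P0 + Q + R0 : ℕ) : ℂ)))) /
            (1 - Complex.exp (2 * Real.pi * Complex.I *
              ((m : ℂ) / (Q : ℂ) - (k : ℂ) / ((P0 + Q + R0 : ℕ) : ℂ)))) := by
  set S : ℕ := P0 + Q + R0
  set ζ : ℂ := exp (2 * Real.pi * I / Q)
  set w : ℂ := exp (-(2 * Real.pi * I * k / S))
  have hζ : IsPrimitiveRoot ζ Q := isPrimitiveRoot_exp Q hQ.ne'
  have hexp_window : ∀ u : ℕ,
      exp (-(2 * Real.pi * I * ((P0 + u : ℕ) : ℂ) * k / S)) = w ^ P0 * w ^ u := fun u => by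
    rw [← exp_nat_mul, ← exp_nat_mul, ← exp_add]; push_cast; ring_nf
  have hexp_dft : ∀ m u : ℕ, exp (-(2 * Real.pi * I * m * u / Q)) = (ζ ^ (m * u))⁻¹ := fun m u => by
    rw [← exp_nat_mul, ← exp_neg]; push_cast; ring_nf
  have hexp_offset : ∀ n : ℕ, exp (-(2 * Real.pi * I * k * n / S)) = w ^ n := fun n => by
    rw [← exp_nat_mul]; ring_nf
  have hexp_ratio : ∀ m : ℕ, exp (2 * Real.pi * I * (m / Q - k / S)) = ζ ^ m * w := fun m => by
    rw [← exp_nat_mul, ← exp_add]; ring_nf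
  simp only [hexp_ratio] at hk
  rw [sum_range_eq_sum_range_add_of_support _ P0 Q R0 fun n hn hout => by simp [hsupp n hn hout]]
  simp only [hexp_window, hexp_dft, hexp_offset, hexp_ratio]
  have hinterp := hζ.sum_mul_pow_eq_sum_dftRange_mul (fun u => h (P0 + u)) w hk
  simp only [dftRange] at hinterp
  rw [← hinterp, mul_sum]
  exact sum_congr rfl fun u _ => by ring
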